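/- arXiv:1711.07891 — 7 statements merged into one kernel-verified Lean document; each statement's English description precedes it below -/
import Mathlib

section
/- Let H ⊆ ℝⁿ be the affine plane {λE + μI − T : λ, μ ∈ ℝ} with E = (e^{k t₁}, …, e^{k tₙ}), k < 0, t₁ < ⋯ < tₙ, I = (1,…,1). If x ∈ H and there exist indices 1 ≤ i < j < m ≤ n with x_i = −x_j = x_m = ±‖x‖_∞, then x is the unique element of minimal max-norm in H. -/
/-! The difference `d = y - x` of two points of `H` has the form `a • E + b`, an affine function
of the strictly monotone sequence `E`. If `‖y‖ ≤ ‖x‖`, then at the three alternation points of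
`x` the values of `d` alternate in sign (`≤ 0`, `≥ 0`, `≤ 0` up to a global sign), and an affine
function of one real variable can only do that if it vanishes identically. -/

lemma affine_eq_zero_of_nonpos_nonneg_nonpos {a b u v w : ℝ} (huv : u < v) (hvw : v < w)
    (hu : a * u + b ≤ 0) (hv : 0 ≤ a * v + b) (hw : a * w + b ≤ 0) : a = 0 ∧ b = 0 := by
  have ha_nonneg : 0 ≤ a := by nlinarith
  have ha_nonpos : a ≤ 0 := by nlinarith
  have ha : a = 0 := le_antisymm ha_nonpos ha_nonneg
  subst ha
  exact ⟨rfl, le_antisymm (by linarith) (by linarith)⟩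

section SupNorm

variable {ι : Type*} [Fintype ι] {x y : ι → ℝ}

lemma sub_nonpos_of_eq_norm (h : ‖y‖ ≤ ‖x‖) {i : ι} (hi : x i = ‖x‖) : y i - x i ≤ 0 := by
  have := (abs_le.mp ((norm_le_pi_norm y i).trans h)).2
  linarith

lemma sub_nonneg_of_eq_neg_norm (h : ‖y‖ ≤ ‖x‖) {i : ι} (hi : x i = -‖x‖) :
    0 ≤ y i - x i := by
  have := (abs_le.mp ((norm_le_pi_norm y i).trans h)).1
  linarith

variable [LinearOrder ι] {E : ι → ℝ}

lemma eq_of_affine_diff_of_alternation_pos (hE : StrictAnti E) {a b : ℝ}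
    (hd : ∀ s, y s - x s = a * E s + b) (h : ‖y‖ ≤ ‖x‖) {i j m : ι} (hij : i < j) (hjm : j < m)
    (hi : x i = ‖x‖) (hj : x j = -‖x‖) (hm : x m = ‖x‖) : y = x := by
  obtain ⟨rfl, rfl⟩ := affine_eq_zero_of_nonpos_nonneg_nonpos (hE hjm) (hE hij)
    (hd m ▸ sub_nonpos_of_eq_norm h hm) (hd j ▸ sub_nonneg_of_eq_neg_norm h hj)
    (hd i ▸ sub_nonpos_of_eq_norm h hi)
  funext s
  linarith [hd s]

lemma eq_of_affine_diff_of_alternation (hE : StrictAnti E)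
    (hd : ∃ a b : ℝ, ∀ s, y s - x s = a * E s + b) (h : ‖y‖ ≤ ‖x‖)
    (halt : ∃ i j m : ι, i < j ∧ j < m ∧
      ((x i = ‖x‖ ∧ x j = -‖x‖ ∧ x m = ‖x‖) ∨ (x i = -‖x‖ ∧ x j = ‖x‖ ∧ x m = -‖x‖))) :
    y = x := by
  obtain ⟨a, b, hd⟩ := hd
  obtain ⟨i, j, m, hij, hjm, ⟨hi, hj, hm⟩ | ⟨hi, hj, hm⟩⟩ := halt
  · exact eq_of_affine_diff_of_alternation_pos hE hd h hij hjm hi hj hm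
  · -- the sign-flipped pattern of `x` is the first pattern of `-x`
    have hd' : ∀ s, (-y) s - (-x) s = -a * E s + -b := fun s => by
      simp only [Pi.neg_apply]
      linarith [hd s]
    exact neg_injective <| eq_of_affine_diff_of_alternation_pos hE hd'
      (by rwa [norm_neg, norm_neg]) hij hjm (by simp [hi]) (by simp [hj]) (by simp [hm])

end SupNorm

lemma exists_affine_diff_of_mem {ι : Type*} {E T x y : ι → ℝ}
    (hx : ∃ l m : ℝ, x = l • E + m • (fun _ => (1 : ℝ)) - T)
    (hy : ∃ l m : ℝ, y = l • E + m • (fun _ => (1 : ℝ)) - T) :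
    ∃ a b : ℝ, ∀ s, y s - x s = a * E s + b := by
  obtain ⟨lx, mx, rfl⟩ := hx
  obtain ⟨ly, my, rfl⟩ := hy
  refine ⟨ly - lx, my - mx, fun s => ?_⟩
  simp only [Pi.sub_apply, Pi.add_apply, Pi.smul_apply, smul_eq_mul, mul_one]
  ring

theorem stmt_2 (n : ℕ) (t : Fin n → ℝ) (ht : StrictMono t) (k : ℝ) (hk : k < 0)
    (T : Fin n → ℝ) (x : Fin n → ℝ)
    (E : Fin n → ℝ) (hE : E = fun i => Real.exp (k * t i))
    (H : Set (Fin n → ℝ))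
    (hH : H = {y | ∃ l m : ℝ, y = l • E + m • (fun _ => (1 : ℝ)) - T})
    (hx : x ∈ H)
    (halt : ∃ i j m : Fin n, i < j ∧ j < m ∧
      ((x i = ‖x‖ ∧ x j = -‖x‖ ∧ x m = ‖x‖) ∨ (x i = -‖x‖ ∧ x j = ‖x‖ ∧ x m = -‖x‖))) :
    ∀ y ∈ H, y ≠ x → ‖x‖ < ‖y‖ := by
  subst hH
  intro y hy hyx
  by_contra! hle
  have hE_anti : StrictAnti E := fun i j hij => by
    simpa only [hE] using Real.exp_lt_exp.mpr (mul_lt_mul_of_neg_left (ht hij) hk)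
  exact hyx (eq_of_affine_diff_of_alternation hE_anti (exists_affine_diff_of_mem hx hy) hle halt)
end

section
/- Let f₁(t) = a₁ e^{k₁ t} + b₁ and f₃(t) = a₃ e^{k₃ t} + b₃ with a₁, a₃ ≠ 0 and k₁, k₃ < 0. If there exist c₁ < c₂ with f₁(c₁) = f₃(c₁), f₁(c₂) = f₃(c₂), and f₁′(c₁) = f₃′(c₁), then f₁ = f₃ identically. -/
/-
With `g t = a₁ e^{k₁ t} - a₃ e^{k₃ t}`, Rolle's theorem on `[c₁, c₂]` gives a zero of `g'` in
`(c₁, c₂)`, and `g'(c₁) = 0` by hypothesis. But `g'` is a difference of two exponentials, and such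
a difference that vanishes at two distinct points vanishes identically. Hence `g` is constant, equal
to `g(c₁) = b₃ - b₁`.
-/

open Real

theorem mul_exp_eq_mul_exp_of_eq_of_eq {A B k l s t : ℝ} (hst : s ≠ t)
    (hs : A * exp (k * s) = B * exp (l * s)) (ht : A * exp (k * t) = B * exp (l * t)) (x : ℝ) :
    A * exp (k * x) = B * exp (l * x) := by
  -- cross-multiplying the two equations eliminates `B`
  have hcross : A * (exp (k * s + l * t) - exp (k * t + l * s)) = 0 := by
    rw [exp_add, exp_add]
    linear_combination exp (l * t) * hs - exp (l * s) * ht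
  rcases mul_eq_zero.1 hcross with hA | hexp
  · have hB : B = 0 := by
      simpa [hA, (exp_pos _).ne'] using hs.symm
    simp [hA, hB]
  · have hkl : (k - l) * (s - t) = 0 := by
      have := exp_injective (sub_eq_zero.1 hexp)
      linarith
    have hk : k = l := sub_eq_zero.1 ((mul_eq_zero.1 hkl).resolve_right (sub_ne_zero.2 hst))
    subst hk
    have hAB : A = B := mul_right_cancel₀ (exp_pos _).ne' hs
    rw [hAB]

theorem hasDerivAt_mul_exp_mul (a k x : ℝ) :
    HasDerivAt (fun t => a * exp (k * t)) (a * k * exp (k * x)) x := by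
  have := (((hasDerivAt_id x).const_mul k).exp).const_mul a
  simpa [mul_comm, mul_left_comm, mul_assoc] using this

theorem stmt_5_general (a₁ a₃ b₁ b₃ k₁ k₃ c₁ c₂ : ℝ)
    (hc : c₁ < c₂)
    (h1 : a₁ * Real.exp (k₁ * c₁) + b₁ = a₃ * Real.exp (k₃ * c₁) + b₃)
    (h2 : a₁ * Real.exp (k₁ * c₂) + b₁ = a₃ * Real.exp (k₃ * c₂) + b₃)
    (h3 : a₁ * k₁ * Real.exp (k₁ * c₁) = a₃ * k₃ * Real.exp (k₃ * c₁)) :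
    ∀ t : ℝ, a₁ * Real.exp (k₁ * t) + b₁ = a₃ * Real.exp (k₃ * t) + b₃ := by
  set g : ℝ → ℝ := fun t => a₁ * exp (k₁ * t) - a₃ * exp (k₃ * t) with hg
  have hderiv (x : ℝ) :
      HasDerivAt g (a₁ * k₁ * exp (k₁ * x) - a₃ * k₃ * exp (k₃ * x)) x :=
    (hasDerivAt_mul_exp_mul a₁ k₁ x).sub (hasDerivAt_mul_exp_mul a₃ k₃ x)
  obtain ⟨c, hc_mem, hc_zero⟩ := exists_hasDerivAt_eq_zero hc
    (fun x _ => (hderiv x).continuousAt.continuousWithinAt) (by simp only [hg]; linarith)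
    (fun x _ => hderiv x)
  have hderiv_zero (x : ℝ) : a₁ * k₁ * exp (k₁ * x) = a₃ * k₃ * exp (k₃ * x) :=
    mul_exp_eq_mul_exp_of_eq_of_eq hc_mem.1.ne h3 (sub_eq_zero.1 hc_zero) x
  have hg_const (t : ℝ) : g t = g c₁ :=
    is_const_of_deriv_eq_zero (fun x => (hderiv x).differentiableAt)
      (fun x => by rw [(hderiv x).deriv, hderiv_zero, sub_self]) t c₁
  intro t
  have := hg_const t
  simp only [hg] at this
  linarith

theorem stmt_5 (a₁ a₃ b₁ b₃ k₁ k₃ c₁ c₂ : ℝ)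
    (ha₁ : a₁ ≠ 0) (ha₃ : a₃ ≠ 0) (hk₁ : k₁ < 0) (hk₃ : k₃ < 0)
    (hc : c₁ < c₂)
    (h1 : a₁ * Real.exp (k₁ * c₁) + b₁ = a₃ * Real.exp (k₃ * c₁) + b₃)
    (h2 : a₁ * Real.exp (k₁ * c₂) + b₁ = a₃ * Real.exp (k₃ * c₂) + b₃)
    (h3 : a₁ * k₁ * Real.exp (k₁ * c₁) = a₃ * k₃ * Real.exp (k₃ * c₁)) :
    ∀ t : ℝ, a₁ * Real.exp (k₁ * t) + b₁ = a₃ * Real.exp (k₃ * t) + b₃ :=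
  stmt_5_general a₁ a₃ b₁ b₃ k₁ k₃ c₁ c₂ hc h1 h2 h3
end

section
/- Let c₁ < c₂ < c₃ and y₁ > y₂ > y₃ be real numbers such that (y₂ − y₁)/(c₂ − c₁) ≠ (y₃ − y₁)/(c₃ − c₁). Then there exist unique real a, b, k with a ≠ 0, k ≠ 0, such that a e^{k c_i} + b = y_i for i = 1, 2, 3. -/
/-!
Uniqueness: for two interpolants with rates `k ≠ k'`, the function `a e^{kx} - a' e^{k'x}` takes
one value at `c₁ < c₂ < c₃`, so by Rolle its derivative vanishes twice. But
`α e^{px} + β e^{qx} = e^{px} (α + β e^{(q-p)x})` with `p ≠ q` has at most one zero unless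
`α = β = 0`. Equal rates then force `a = a'` and `b = b'`.

Existence: with `u = c₂ - c₁`, `v = c₃ - c₁` and `R = (y₃ - y₁) / (y₂ - y₁) > 1`, the rate must
solve `φ k = e^{kv} - 1 - R (e^{ku} - 1) = 0`. Since `φ 0 = 0` and `φ' 0 = v - R u ≠ 0` by the slope
condition, `φ` is negative on one side of `0`; there it also takes positive values (it tends to
`R - 1` at `-∞` and equals `R - 1` at `log R / (v - u)`), so the intermediate value theorem gives a
nonzero root. The amplitude and offset are then solved linearly.
-/

open Real Filter Topology

lemma eq_zero_of_mul_exp_add_mul_exp_eq_zero {α β p q x y : ℝ} (hpq : p ≠ q) (hxy : x ≠ y)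
    (hx : α * exp (p * x) + β * exp (q * x) = 0) (hy : α * exp (p * y) + β * exp (q * y) = 0) :
    α = 0 ∧ β = 0 := by
  have factor : ∀ z,
      α * exp (p * z) + β * exp (q * z) = exp (p * z) * (α + β * exp ((q - p) * z)) := fun z => by
    rw [show q * z = p * z + (q - p) * z by ring, exp_add]
    ring
  have hβ : β = 0 := by
    by_contra hβ
    rw [factor, mul_eq_zero, or_iff_right (exp_ne_zero _)] at hx hy
    have hexp : exp ((q - p) * x) = exp ((q - p) * y) :=
      mul_left_cancel₀ hβ (by linear_combination hx - hy)
    exact hxy (mul_left_cancel₀ (sub_ne_zero.2 hpq.symm) (exp_injective hexp))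
  subst hβ
  simpa [exp_ne_zero] using hx

lemma eq_zero_of_mul_exp_add_mul_exp_eq_eq {α β p q x₁ x₂ x₃ : ℝ} (hp : p ≠ 0) (hq : q ≠ 0)
    (hpq : p ≠ q) (h₁₂ : x₁ < x₂) (h₂₃ : x₂ < x₃)
    (h₁ : α * exp (p * x₁) + β * exp (q * x₁) = α * exp (p * x₂) + β * exp (q * x₂))
    (h₂ : α * exp (p * x₂) + β * exp (q * x₂) = α * exp (p * x₃) + β * exp (q * x₃)) :
    α = 0 ∧ β = 0 := by
  set f : ℝ → ℝ := fun x => α * exp (p * x) + β * exp (q * x)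
  have hf : ∀ x, HasDerivAt f (α * (p * exp (p * x)) + β * (q * exp (q * x))) x := by
    intro x
    have hexp : ∀ r, HasDerivAt (fun x => exp (r * x)) (r * exp (r * x)) x := fun r => by
      simpa [mul_comm] using ((hasDerivAt_id x).const_mul r).exp
    exact ((hexp p).const_mul α).add ((hexp q).const_mul β)
  have hfc : Continuous f := by fun_prop
  obtain ⟨d₁, hd₁, hf'd₁⟩ :=
    exists_hasDerivAt_eq_zero h₁₂ hfc.continuousOn h₁ (fun x _ => hf x)
  obtain ⟨d₂, hd₂, hf'd₂⟩ :=
    exists_hasDerivAt_eq_zero h₂₃ hfc.continuousOn h₂ (fun x _ => hf x)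
  simp only [← mul_assoc] at hf'd₁ hf'd₂
  obtain ⟨hαp, hβq⟩ :=
    eq_zero_of_mul_exp_add_mul_exp_eq_zero hpq (hd₁.2.trans hd₂.1).ne hf'd₁ hf'd₂
  exact ⟨(mul_eq_zero.1 hαp).resolve_right hp, (mul_eq_zero.1 hβq).resolve_right hq⟩

lemma eq_of_mul_exp_add_eq {a b k a' b' k' x₁ x₂ x₃ : ℝ} (ha : a ≠ 0) (hk : k ≠ 0) (hk' : k' ≠ 0)
    (h₁₂ : x₁ < x₂) (h₂₃ : x₂ < x₃)
    (h₁ : a * exp (k * x₁) + b = a' * exp (k' * x₁) + b')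
    (h₂ : a * exp (k * x₂) + b = a' * exp (k' * x₂) + b')
    (h₃ : a * exp (k * x₃) + b = a' * exp (k' * x₃) + b') :
    a = a' ∧ b = b' ∧ k = k' := by
  obtain rfl : k = k' := by
    by_contra hkk'
    exact ha (eq_zero_of_mul_exp_add_mul_exp_eq_eq (β := -a') hk hk' hkk' h₁₂ h₂₃
      (by linear_combination h₁ - h₂) (by linear_combination h₂ - h₃)).1
  -- the constant `b - b'` is the exponential with rate `0`
  have hexp : ∀ x, a * exp (k * x) + b = a' * exp (k * x) + b' →
      (a - a') * exp (k * x) + (b - b') * exp (0 * x) = 0 := fun x h => by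
    rw [zero_mul, exp_zero]
    linear_combination h
  obtain ⟨haa', hbb'⟩ := eq_zero_of_mul_exp_add_mul_exp_eq_zero hk h₁₂.ne (hexp _ h₁) (hexp _ h₂)
  exact ⟨sub_eq_zero.1 haa', sub_eq_zero.1 hbb', rfl⟩

lemma HasDerivAt.exists_lt_left_of_pos {f : ℝ → ℝ} {f' x : ℝ} (hf : HasDerivAt f f' x)
    (hf' : 0 < f') : ∃ y < x, f y < f x := by
  have hslope := (hasDerivAt_iff_tendsto_slope.1 hf).mono_left (nhdsLT_le_nhdsNE x)
  obtain ⟨y, hy, hxy⟩ := ((hslope.eventually (eventually_gt_nhds hf')).and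
    self_mem_nhdsWithin).exists
  exact ⟨y, hxy, (slope_pos_iff_gt hxy).1 hy⟩

lemma HasDerivAt.exists_lt_right_of_neg {f : ℝ → ℝ} {f' x : ℝ} (hf : HasDerivAt f f' x)
    (hf' : f' < 0) : ∃ y > x, f y < f x := by
  have hslope := (hasDerivAt_iff_tendsto_slope.1 hf).mono_left (nhdsGT_le_nhdsNE x)
  obtain ⟨y, hy, hxy⟩ := ((hslope.eventually (eventually_lt_nhds hf')).and
    self_mem_nhdsWithin).exists
  rw [slope_def_field, div_lt_iff₀ (sub_pos.2 hxy), zero_mul, sub_neg] at hy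
  exact ⟨y, hxy, hy⟩

lemma exists_ne_zero_exp_sub_one_eq_mul {u v R : ℝ} (hu : 0 < u) (huv : u < v) (hR : 1 < R)
    (hRuv : R * u ≠ v) : ∃ k ≠ 0, exp (k * v) - 1 = R * (exp (k * u) - 1) := by
  set φ : ℝ → ℝ := fun k => exp (k * v) - 1 - R * (exp (k * u) - 1)
  suffices ∃ k ≠ 0, φ k = 0 by simpa only [φ, sub_eq_zero] using this
  have hφc : Continuous φ := by fun_prop
  have hφ0 : φ 0 = 0 := by simp [φ]
  have hφ' : HasDerivAt φ (v - R * u) 0 := by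
    have hexp : ∀ r, HasDerivAt (fun k => exp (k * r)) r 0 := fun r => by
      simpa using (hasDerivAt_mul_const (x := 0) r).exp
    exact ((hexp v).sub_const 1).sub (((hexp u).sub_const 1).const_mul R)
  rcases hRuv.lt_or_gt with h | h
  · obtain ⟨k₀, hk₀, hφk₀⟩ := hφ'.exists_lt_left_of_pos (sub_pos.2 h)
    have hlim : Tendsto φ atBot (𝓝 (R - 1)) := by
      have hexp : ∀ r > 0, Tendsto (fun k => exp (k * r)) atBot (𝓝 0) := fun r hr =>
        tendsto_exp_atBot.comp (tendsto_id.atBot_mul_const hr)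
      convert ((hexp v (hu.trans huv)).sub_const 1).sub
        (((hexp u hu).sub_const 1).const_mul R) using 2
      ring
    obtain ⟨k₁, hk₁, hφk₁⟩ :=
      ((eventually_lt_atBot 0).and (hlim.eventually (lt_mem_nhds (sub_pos.2 hR)))).exists
    obtain ⟨k, hk, hφk⟩ := isPreconnected_Iio.intermediate_value hk₀ hk₁ hφc.continuousOn
      ⟨(hφk₀.trans_eq hφ0).le, hφk₁.le⟩
    exact ⟨k, hk.ne, hφk⟩
  · obtain ⟨k₀, hk₀, hφk₀⟩ := hφ'.exists_lt_right_of_neg (sub_neg.2 h)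
    set k₁ := log R / (v - u)
    have hk₁ : 0 < k₁ := div_pos (log_pos hR) (sub_pos.2 huv)
    have hφk₁ : φ k₁ = R - 1 := by
      have hexp : exp (k₁ * v) = R * exp (k₁ * u) := by
        have hk₁vu : k₁ * (v - u) = log R := div_mul_cancel₀ _ (sub_pos.2 huv).ne'
        rw [show k₁ * v = log R + k₁ * u by linear_combination hk₁vu, exp_add,
          exp_log (by linarith)]
      simp only [φ, hexp]
      ring
    obtain ⟨k, hk, hφk⟩ := isPreconnected_Ioi.intermediate_value hk₀ hk₁ hφc.continuousOn
      ⟨(hφk₀.trans_eq hφ0).le, by linarith⟩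
    exact ⟨k, hk.ne', hφk⟩

lemma exists_mul_exp_add_eq_of_exp_sub_one_eq {c₁ c₂ c₃ y₁ y₂ y₃ k : ℝ} (hk : k ≠ 0)
    (hc : c₁ ≠ c₂) (hy : y₁ ≠ y₂)
    (h : exp (k * (c₃ - c₁)) - 1 = (y₃ - y₁) / (y₂ - y₁) * (exp (k * (c₂ - c₁)) - 1)) :
    ∃ a b, a ≠ 0 ∧ a * exp (k * c₁) + b = y₁ ∧ a * exp (k * c₂) + b = y₂ ∧
      a * exp (k * c₃) + b = y₃ := by
  have hE : exp (k * c₂) - exp (k * c₁) ≠ 0 :=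
    sub_ne_zero.2 fun h => hc (mul_left_cancel₀ hk (exp_injective h)).symm
  have hy' : y₂ - y₁ ≠ 0 := sub_ne_zero.2 hy.symm
  set a := (y₂ - y₁) / (exp (k * c₂) - exp (k * c₁))
  have ha : a * (exp (k * c₂) - exp (k * c₁)) = y₂ - y₁ := div_mul_cancel₀ _ hE
  refine ⟨a, y₁ - a * exp (k * c₁), div_ne_zero hy' hE, by ring, by linear_combination ha, ?_⟩
  have hshift : ∀ c, exp (k * c) - exp (k * c₁) = exp (k * c₁) * (exp (k * (c - c₁)) - 1) :=
    fun c => by rw [mul_sub, ← exp_add]; ring_nf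
  rw [hshift] at ha
  field_simp at h
  have key : a * (exp (k * c₃) - exp (k * c₁)) * (y₂ - y₁) = (y₃ - y₁) * (y₂ - y₁) := by
    rw [hshift]
    linear_combination a * exp (k * c₁) * h + (y₃ - y₁) * ha
  linear_combination mul_right_cancel₀ hy' key

theorem stmt_7 (c₁ c₂ c₃ y₁ y₂ y₃ : ℝ)
    (hc12 : c₁ < c₂) (hc23 : c₂ < c₃) (hy12 : y₁ > y₂) (hy23 : y₂ > y₃)
    (hslope : (y₂ - y₁) / (c₂ - c₁) ≠ (y₃ - y₁) / (c₃ - c₁)) :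
    ∃! p : ℝ × ℝ × ℝ, p.1 ≠ 0 ∧ p.2.2 ≠ 0 ∧
      p.1 * Real.exp (p.2.2 * c₁) + p.2.1 = y₁ ∧
      p.1 * Real.exp (p.2.2 * c₂) + p.2.1 = y₂ ∧
      p.1 * Real.exp (p.2.2 * c₃) + p.2.1 = y₃ := by
  have hc : 0 < c₂ - c₁ := sub_pos.2 hc12
  have hy : y₂ - y₁ < 0 := sub_neg.2 hy12
  have hR : 1 < (y₃ - y₁) / (y₂ - y₁) := by
    rw [one_lt_div_of_neg hy]
    linarith
  have hRc : (y₃ - y₁) / (y₂ - y₁) * (c₂ - c₁) ≠ c₃ - c₁ := by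
    contrapose! hslope
    rw [div_eq_div_iff hc.ne' (by linarith), ← hslope]
    field_simp [hy.ne]
  obtain ⟨k, hk, hkR⟩ := exists_ne_zero_exp_sub_one_eq_mul hc (by linarith) hR hRc
  obtain ⟨a, b, ha, h₁, h₂, h₃⟩ :=
    exists_mul_exp_add_eq_of_exp_sub_one_eq hk hc12.ne hy12.ne' hkR
  refine ⟨(a, b, k), ⟨ha, hk, h₁, h₂, h₃⟩, ?_⟩
  rintro ⟨a', b', k'⟩ ⟨ha', hk', h₁', h₂', h₃'⟩
  obtain ⟨rfl, rfl, rfl⟩ := eq_of_mul_exp_add_eq ha' hk' hk hc12 hc23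
    (h₁'.trans h₁.symm) (h₂'.trans h₂.symm) (h₃'.trans h₃.symm)
  rfl
end

section
/- For fixed c₁ < c₂ < c₃ and y₁ > y₂, the function φ : ℝ → ℝ defined by φ(k) = (y₂ − y₁)·(e^{k c₃} − e^{k c₁})/(e^{k c₂} − e^{k c₁}) + y₁ for k ≠ 0 and φ(0) = (y₂ − y₁)(c₃ − c₁)/(c₂ − c₁) + y₁ is continuous, strictly decreasing, tends to y₂ as k → −∞ and to −∞ as k → +∞; consequently φ is a bijection from ℝ onto (−∞, y₂). -/
/-!
Put `r = (c₃ - c₁) / (c₂ - c₁) > 1` and `u = e^{k (c₂ - c₁)}`. Factoring out `e^{k c₁}`, the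
quotient `(e^{k c₃} - e^{k c₁}) / (e^{k c₂} - e^{k c₁})` is `(u ^ r - 1) / (u - 1)`, the slope of the
strictly convex function `u ↦ u ^ r` between `1` and `u`, and the value `r` chosen at `k = 0` is
its derivative at `1`; so `φ k = (y₂ - y₁) · dslope (· ^ r) 1 u + y₁`. Secant slopes of a strictly
convex function from a fixed point increase strictly; here they tend to `1` as `u → 0⁺` and to
`∞` as `u → ∞`. As `y₂ - y₁ < 0`, `φ` is strictly decreasing from `y₂` to `-∞`, and the
intermediate value theorem gives surjectivity onto `(-∞, y₂)`.
-/

open Real Set Filter Topology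

theorem StrictConvexOn.strictMonoOn_dslope {s : Set ℝ} {f : ℝ → ℝ} {a : ℝ}
    (hf : StrictConvexOn ℝ s f) (ha : a ∈ s) (hfa : DifferentiableAt ℝ f a) :
    StrictMonoOn (dslope f a) s := by
  intro x hx y hy hxy
  rcases eq_or_ne x a with rfl | hxa
  · rw [dslope_same, dslope_of_ne f hxy.ne']
    exact hf.deriv_lt_slope hx hy hxy hfa
  rcases eq_or_ne y a with rfl | hya
  · rw [dslope_same, dslope_of_ne f hxy.ne, slope_comm]
    exact hf.slope_lt_deriv hx hy hxy hfa
  rw [dslope_of_ne f hxa, dslope_of_ne f hya, slope_def_field, slope_def_field]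
  exact hf.secant_strict_mono ha hx hy hxa hya hxy

theorem StrictAnti.bijOn_Iio_of_tendsto {f : ℝ → ℝ} {a : ℝ} (hf : StrictAnti f)
    (hcont : Continuous f) (hbot : Tendsto f atBot (𝓝 a)) (htop : Tendsto f atTop atBot) :
    BijOn f univ (Iio a) := by
  refine ⟨fun x _ => (hf (sub_one_lt x)).trans_le (hf.antitone.ge_of_tendsto hbot _),
    hf.injective.injOn, fun y (hy : y < a) => ?_⟩
  obtain ⟨s, hs⟩ := (hbot.eventually (eventually_gt_nhds hy)).exists
  obtain ⟨t, ht⟩ := (htop.eventually (eventually_le_atBot y)).exists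
  obtain ⟨x, -, hx⟩ :=
    intermediate_value_uIcc hcont.continuousOn (Icc_subset_uIcc' ⟨ht, hs.le⟩)
  exact ⟨x, trivial, hx⟩

section dslopeRpow

variable {r : ℝ}

theorem dslope_rpow_one_one : dslope (fun u : ℝ => u ^ r) 1 1 = r := by
  rw [dslope_same, Real.deriv_rpow_const, one_rpow, mul_one]

theorem continuous_dslope_rpow_one (hr : 0 ≤ r) : Continuous (dslope (fun u : ℝ => u ^ r) 1) := by
  rw [← continuousOn_univ, continuousOn_dslope univ_mem]
  exact ⟨(continuous_rpow_const hr).continuousOn,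
    (hasDerivAt_rpow_const (Or.inl one_ne_zero)).differentiableAt⟩

theorem strictMonoOn_dslope_rpow_one (hr : 1 < r) :
    StrictMonoOn (dslope (fun u : ℝ => u ^ r) 1) (Ici 0) :=
  (strictConvexOn_rpow hr).strictMonoOn_dslope (mem_Ici.2 zero_le_one)
    (hasDerivAt_rpow_const (Or.inl one_ne_zero)).differentiableAt

theorem tendsto_dslope_rpow_one_nhdsGT_zero (hr : 0 < r) :
    Tendsto (dslope (fun u : ℝ => u ^ r) 1) (𝓝[>] 0) (𝓝 1) := by
  have h0 : dslope (fun u : ℝ => u ^ r) 1 0 = 1 := by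
    rw [dslope_of_ne _ zero_ne_one, slope_def_field, zero_rpow hr.ne', one_rpow]
    norm_num
  simpa only [h0] using
    ((continuous_dslope_rpow_one hr.le).tendsto 0).mono_left nhdsWithin_le_nhds

theorem tendsto_dslope_rpow_one_atTop (hr : 1 < r) :
    Tendsto (dslope (fun u : ℝ => u ^ r) 1) atTop atTop := by
  refine tendsto_atTop_mono' atTop ?_ (tendsto_rpow_atTop (sub_pos.2 hr))
  filter_upwards [eventually_gt_atTop 1] with u hu
  have hu0 : 0 < u := zero_lt_one.trans hu
  -- `u ^ (r - 1) * (u - 1) ≤ u ^ r - 1` because `1 ≤ u ^ (r - 1)`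
  have h1 : 1 ≤ u ^ (r - 1) := one_le_rpow hu.le (sub_pos.2 hr).le
  have h2 : u ^ (r - 1) * u = u ^ r := by rw [← rpow_add_one hu0.ne', sub_add_cancel]
  rw [dslope_of_ne _ hu.ne', slope_def_field, one_rpow, le_div_iff₀ (sub_pos.2 hu)]
  nlinarith

end dslopeRpow

theorem exp_sub_div_exp_sub_eq_dslope {c₁ c₂ c₃ k : ℝ} (hc : c₁ ≠ c₂) (hk : k ≠ 0) :
    (exp (k * c₃) - exp (k * c₁)) / (exp (k * c₂) - exp (k * c₁)) =
      dslope (fun u : ℝ => u ^ ((c₃ - c₁) / (c₂ - c₁))) 1 (exp (k * (c₂ - c₁))) := by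
  have hc' : c₂ - c₁ ≠ 0 := sub_ne_zero.2 hc.symm
  have hexp : exp (k * (c₂ - c₁)) ≠ 1 := by
    rw [Ne, exp_eq_one_iff]; exact mul_ne_zero hk hc'
  have hpow : exp (k * (c₂ - c₁)) ^ ((c₃ - c₁) / (c₂ - c₁)) = exp (k * (c₃ - c₁)) := by
    rw [← exp_mul]; field_simp
  have hsplit : ∀ c, exp (k * c) = exp (k * (c - c₁)) * exp (k * c₁) := fun c => by
    rw [← exp_add]; ring_nf
  rw [dslope_of_ne _ hexp, slope_def_field, hpow, one_rpow, hsplit c₃, hsplit c₂,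
    ← sub_one_mul, ← sub_one_mul, mul_div_mul_right _ _ (exp_pos _).ne']

theorem stmt_8 (c₁ c₂ c₃ y₁ y₂ : ℝ)
    (hc12 : c₁ < c₂) (hc23 : c₂ < c₃) (hy : y₁ > y₂)
    (φ : ℝ → ℝ)
    (hφ : φ = fun k => if k = 0 then (y₂ - y₁) * (c₃ - c₁) / (c₂ - c₁) + y₁
      else (y₂ - y₁) * (Real.exp (k * c₃) - Real.exp (k * c₁)) /
        (Real.exp (k * c₂) - Real.exp (k * c₁)) + y₁) :
    Continuous φ ∧ StrictAnti φ ∧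
      Filter.Tendsto φ Filter.atBot (nhds y₂) ∧
      Filter.Tendsto φ Filter.atTop Filter.atBot ∧
      Set.BijOn φ Set.univ (Set.Iio y₂) := by
  set r := (c₃ - c₁) / (c₂ - c₁)
  have hb : 0 < c₂ - c₁ := sub_pos.2 hc12
  have hr : 1 < r := (one_lt_div hb).2 (by linarith)
  have hy' : y₂ - y₁ < 0 := sub_neg.2 hy
  set g := fun k : ℝ => dslope (fun u : ℝ => u ^ r) 1 (exp (k * (c₂ - c₁)))
  have hφg : φ = fun k => (y₂ - y₁) * g k + y₁ := by
    subst hφ; ext k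
    rcases eq_or_ne k 0 with rfl | hk
    · simp only [if_pos, zero_mul, exp_zero, g, dslope_rpow_one_one, r, mul_div_assoc]
    · simp only [if_neg hk, g, mul_div_assoc, exp_sub_div_exp_sub_eq_dslope hc12.ne hk, r]
  have hexp_mono : StrictMono fun k : ℝ => exp (k * (c₂ - c₁)) :=
    exp_strictMono.comp (strictMono_mul_right_of_pos hb)
  have hg_cont : Continuous g := (continuous_dslope_rpow_one (by linarith)).comp (by fun_prop)
  have hg_mono : StrictMono g := fun k l hkl =>
    strictMonoOn_dslope_rpow_one hr (exp_pos _).le (exp_pos _).le (hexp_mono hkl)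
  have hg_bot : Tendsto g atBot (𝓝 1) :=
    (tendsto_dslope_rpow_one_nhdsGT_zero (by linarith)).comp <| tendsto_nhdsWithin_iff.2
      ⟨tendsto_exp_atBot.comp (tendsto_id.atBot_mul_const hb), .of_forall fun _ => exp_pos _⟩
  have hg_top : Tendsto g atTop atTop :=
    (tendsto_dslope_rpow_one_atTop hr).comp
      (tendsto_exp_atTop.comp (tendsto_id.atTop_mul_const hb))
  have hcont : Continuous φ := hφg ▸ by fun_prop
  have hanti : StrictAnti φ := hφg ▸ fun k l hkl => by
    simpa using mul_lt_mul_of_neg_left (hg_mono hkl) hy'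
  have hbot : Tendsto φ atBot (𝓝 y₂) := by
    simpa [hφg] using (hg_bot.const_mul (y₂ - y₁)).add_const y₁
  have htop : Tendsto φ atTop atBot :=
    hφg ▸ tendsto_atBot_add_const_right _ y₁ ((tendsto_const_mul_atBot_of_neg hy').2 hg_top)
  exact ⟨hcont, hanti, hbot, htop, hanti.bijOn_Iio_of_tendsto hcont hbot htop⟩
end

section
/- Let k₁ < k₂ < k₃ < 0, c₁ < c₂ real, and let f₁(t) = a₁ e^{k₁ t} + b₁, f₃(t) = a₃ e^{k₃ t} + b₃ with a₁, a₃ of the same nonzero sign, f₁(c₁) = f₃(c₁), f₁(c₂) = f₃(c₂), and f₁ ≠ f₃. Then there exist a₂ ≠ 0 and b₂ ∈ ℝ such that f₂(t) = a₂ e^{k₂ t} + b₂ satisfies f₂(c₁) = f₁(c₁), f₂(c₂) = f₁(c₂), and min{f₁(t), f₃(t)} ≤ f₂(t) ≤ max{f₁(t), f₃(t)} for every t ∈ ℝ, with strict inequalities for t ∉ {c₁, c₂}. -/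
open Real

lemma key_pos (p q A B C c₁ c₂ : ℝ) (hpq : p < q) (hq : q < 0)
    (hA : 0 < A) (hB : B ≠ 0) (hc : c₁ < c₂)
    (h1 : A * exp (p * c₁) + B * exp (q * c₁) + C = 0)
    (h2 : A * exp (p * c₂) + B * exp (q * c₂) + C = 0) :
    ∀ t, (t < c₁ → 0 < A * exp (p * t) + B * exp (q * t) + C) ∧
         (c₁ < t → t < c₂ → A * exp (p * t) + B * exp (q * t) + C < 0) ∧
         (c₂ < t → 0 < A * exp (p * t) + B * exp (q * t) + C) := by
  set F : ℝ → ℝ := fun t => A * exp (p * t) + B * exp (q * t) + C with hF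
  have hp : p < 0 := lt_trans hpq hq
  have hF' : ∀ t, HasDerivAt F (A * (exp (p * t) * p) + B * (exp (q * t) * q)) t := by
    intro t
    have d1 : HasDerivAt (fun t : ℝ => p * t) p t := by
      simpa using (hasDerivAt_id t).const_mul p
    have d2 : HasDerivAt (fun t : ℝ => q * t) q t := by
      simpa using (hasDerivAt_id t).const_mul q
    exact ((d1.exp.const_mul A).add (d2.exp.const_mul B)).add_const C
  have hFc : Continuous F := by
    rw [hF]; fun_prop
  have hBneg : B < 0 := by
    rcases hB.lt_or_gt with h | h
    · exact h
    · exfalso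
      have hanti : StrictAnti F := by
        apply strictAnti_of_deriv_neg
        intro t
        rw [(hF' t).deriv]
        have e1 := exp_pos (p * t)
        have e2 := exp_pos (q * t)
        nlinarith [mul_pos hA e1, mul_pos h e2]
      have := hanti hc
      rw [show F c₁ = 0 from h1, show F c₂ = 0 from h2] at this
      exact lt_irrefl 0 this
  -- critical point
  set r : ℝ := (A * (-p)) / (B * q) with hr
  have hBq : 0 < B * q := mul_pos_of_neg_of_neg hBneg hq
  have hrpos : 0 < r := div_pos (mul_pos hA (by linarith)) hBq
  set t₀ : ℝ := Real.log r / (q - p) with ht₀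
  have hqp : 0 < q - p := by linarith
  have hexpt₀ : exp ((q - p) * t₀) = r := by
    rw [ht₀, mul_div_cancel₀ _ (ne_of_gt hqp)]
    exact exp_log hrpos
  have hderivneg : ∀ t < t₀, deriv F t < 0 := by
    intro t ht
    rw [(hF' t).deriv]
    have hlt : exp ((q - p) * t) < r := by
      rw [← hexpt₀]
      exact exp_lt_exp.2 (by nlinarith)
    have hsplit : exp (q * t) = exp (p * t) * exp ((q - p) * t) := by
      rw [← exp_add]; ring_nf
    have e1 := exp_pos (p * t)
    have key : B * q * exp ((q - p) * t) < A * (-p) := by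
      have : B * q * exp ((q - p) * t) < B * q * r := by
        exact (mul_lt_mul_iff_right₀ hBq).2 hlt
      rw [hr] at this
      rw [mul_div_cancel₀ _ (ne_of_gt hBq)] at this
      exact this
    rw [hsplit]
    nlinarith [mul_lt_mul_of_pos_right key e1, mul_pos hA e1]
  have hderivpos : ∀ t, t₀ < t → 0 < deriv F t := by
    intro t ht
    rw [(hF' t).deriv]
    have hlt : r < exp ((q - p) * t) := by
      rw [← hexpt₀]
      exact exp_lt_exp.2 (by nlinarith)
    have hsplit : exp (q * t) = exp (p * t) * exp ((q - p) * t) := by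
      rw [← exp_add]; ring_nf
    have e1 := exp_pos (p * t)
    have key : A * (-p) < B * q * exp ((q - p) * t) := by
      have : B * q * r < B * q * exp ((q - p) * t) := (mul_lt_mul_iff_right₀ hBq).2 hlt
      rw [hr, mul_div_cancel₀ _ (ne_of_gt hBq)] at this
      exact this
    rw [hsplit]
    nlinarith [mul_lt_mul_of_pos_right key e1, mul_pos hA e1]
  have hanti : StrictAntiOn F (Set.Iic t₀) := by
    apply strictAntiOn_of_deriv_neg (convex_Iic t₀) hFc.continuousOn
    intro t ht
    rw [interior_Iic] at ht
    exact hderivneg t ht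
  have hmono : StrictMonoOn F (Set.Ici t₀) := by
    apply strictMonoOn_of_deriv_pos (convex_Ici t₀) hFc.continuousOn
    intro t ht
    rw [interior_Ici] at ht
    exact hderivpos t ht
  have hc₁t₀ : c₁ < t₀ := by
    by_contra h
    push_neg at h
    have := hmono (Set.mem_Ici.2 h) (Set.mem_Ici.2 (by linarith)) hc
    rw [show F c₁ = 0 from h1, show F c₂ = 0 from h2] at this
    exact lt_irrefl 0 this
  have ht₀c₂ : t₀ < c₂ := by
    by_contra h
    push_neg at h
    have := hanti (Set.mem_Iic.2 (by linarith)) (Set.mem_Iic.2 h) hc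
    rw [show F c₁ = 0 from h1, show F c₂ = 0 from h2] at this
    exact lt_irrefl 0 this
  intro t
  refine ⟨fun ht => ?_, fun ht1 ht2 => ?_, fun ht => ?_⟩
  · have := hanti (Set.mem_Iic.2 (by linarith : t ≤ t₀)) (Set.mem_Iic.2 hc₁t₀.le) ht
    rw [show F c₁ = 0 from h1] at this
    exact this
  · rcases le_or_gt t t₀ with h | h
    · have := hanti (Set.mem_Iic.2 hc₁t₀.le) (Set.mem_Iic.2 h) ht1
      rw [show F c₁ = 0 from h1] at this
      exact this
    · have := hmono (Set.mem_Ici.2 h.le) (Set.mem_Ici.2 ht₀c₂.le) ht2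
      rw [show F c₂ = 0 from h2] at this
      exact this
  · have := hmono (Set.mem_Ici.2 ht₀c₂.le) (Set.mem_Ici.2 (by linarith : t₀ ≤ t)) ht
    rw [show F c₂ = 0 from h2] at this
    exact this

lemma key_sign (p q A B C c₁ c₂ : ℝ) (hpq : p < q) (hq : q < 0)
    (hA : A ≠ 0) (hB : B ≠ 0) (hc : c₁ < c₂)
    (h1 : A * exp (p * c₁) + B * exp (q * c₁) + C = 0)
    (h2 : A * exp (p * c₂) + B * exp (q * c₂) + C = 0) :
    ∀ t, (t < c₁ → 0 < A * (A * exp (p * t) + B * exp (q * t) + C)) ∧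
         (c₁ < t → t < c₂ → A * (A * exp (p * t) + B * exp (q * t) + C) < 0) ∧
         (c₂ < t → 0 < A * (A * exp (p * t) + B * exp (q * t) + C)) := by
  rcases hA.lt_or_gt with h | h
  · have h1' : (-A) * exp (p * c₁) + (-B) * exp (q * c₁) + (-C) = 0 := by linarith
    have h2' : (-A) * exp (p * c₂) + (-B) * exp (q * c₂) + (-C) = 0 := by linarith
    have K := key_pos p q (-A) (-B) (-C) c₁ c₂ hpq hq (by linarith) (neg_ne_zero.2 hB) hc h1' h2'
    intro t
    obtain ⟨K1, K2, K3⟩ := K t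
    refine ⟨fun ht => ?_, fun ht1 ht2 => ?_, fun ht => ?_⟩
    · nlinarith [K1 ht]
    · nlinarith [K2 ht1 ht2]
    · nlinarith [K3 ht]
  · have K := key_pos p q A B C c₁ c₂ hpq hq h hB hc h1 h2
    intro t
    obtain ⟨K1, K2, K3⟩ := K t
    refine ⟨fun ht => ?_, fun ht1 ht2 => ?_, fun ht => ?_⟩
    · exact mul_pos h (K1 ht)
    · exact mul_neg_of_pos_of_neg h (K2 ht1 ht2)
    · exact mul_pos h (K3 ht)

theorem stmt_11 (k₁ k₂ k₃ c₁ c₂ a₁ a₃ b₁ b₃ : ℝ)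
    (hk12 : k₁ < k₂) (hk23 : k₂ < k₃) (hk3 : k₃ < 0) (hc : c₁ < c₂)
    (ha : a₁ * a₃ > 0)
    (f₁ f₃ : ℝ → ℝ)
    (hf₁ : f₁ = fun t => a₁ * Real.exp (k₁ * t) + b₁)
    (hf₃ : f₃ = fun t => a₃ * Real.exp (k₃ * t) + b₃)
    (h1 : f₁ c₁ = f₃ c₁) (h2 : f₁ c₂ = f₃ c₂) (hne : f₁ ≠ f₃) :
    ∃ a₂ b₂ : ℝ, a₂ ≠ 0 ∧
      (fun t => a₂ * Real.exp (k₂ * t) + b₂) c₁ = f₁ c₁ ∧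
      (fun t => a₂ * Real.exp (k₂ * t) + b₂) c₂ = f₁ c₂ ∧
      (∀ t : ℝ, min (f₁ t) (f₃ t) ≤ a₂ * Real.exp (k₂ * t) + b₂ ∧
        a₂ * Real.exp (k₂ * t) + b₂ ≤ max (f₁ t) (f₃ t)) ∧
      (∀ t : ℝ, t ≠ c₁ → t ≠ c₂ →
        min (f₁ t) (f₃ t) < a₂ * Real.exp (k₂ * t) + b₂ ∧
        a₂ * Real.exp (k₂ * t) + b₂ < max (f₁ t) (f₃ t)) := by
  have hk2 : k₂ < 0 := lt_trans hk23 hk3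
  have hk1 : k₁ < 0 := lt_trans hk12 hk2
  have ha₁ : a₁ ≠ 0 := by rintro rfl; simp at ha
  have ha₃ : a₃ ≠ 0 := by rintro rfl; simp at ha
  have hd₁ : 0 < exp (k₁ * c₁) - exp (k₁ * c₂) :=
    sub_pos.2 (exp_lt_exp.2 (by nlinarith))
  have hd₂ : 0 < exp (k₂ * c₁) - exp (k₂ * c₂) :=
    sub_pos.2 (exp_lt_exp.2 (by nlinarith))
  obtain ⟨a₂, ha₂def⟩ : ∃ x : ℝ, x = a₁ * (exp (k₁ * c₁) - exp (k₁ * c₂)) /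
      (exp (k₂ * c₁) - exp (k₂ * c₂)) := ⟨_, rfl⟩
  obtain ⟨b₂, hb₂def⟩ : ∃ x : ℝ, x = a₁ * exp (k₁ * c₁) + b₁ - a₂ * exp (k₂ * c₁) :=
    ⟨_, rfl⟩
  have ha₁a₂ : 0 < a₁ * a₂ := by
    have : a₁ * a₂ = a₁ ^ 2 * (exp (k₁ * c₁) - exp (k₁ * c₂)) /
        (exp (k₂ * c₁) - exp (k₂ * c₂)) := by rw [ha₂def]; ring
    rw [this]
    positivity
  have ha₂ : a₂ ≠ 0 := by
    intro h
    rw [h, mul_zero] at ha₁a₂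
    exact lt_irrefl 0 ha₁a₂
  have hmul : a₂ * (exp (k₂ * c₁) - exp (k₂ * c₂)) =
      a₁ * (exp (k₁ * c₁) - exp (k₁ * c₂)) := by
    rw [ha₂def]
    field_simp
    exact div_self (by rw [mul_comm c₁, mul_comm c₂]; exact ne_of_gt hd₂)
  have e₂c₁ : a₂ * exp (k₂ * c₁) + b₂ = f₁ c₁ := by
    simp only [hf₁]
    rw [hb₂def]; ring
  have e₂c₂ : a₂ * exp (k₂ * c₂) + b₂ = f₁ c₂ := by
    simp only [hf₁]
    rw [hb₂def]
    linear_combination -hmul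
  have hf₁c₁ : f₁ c₁ = a₁ * exp (k₁ * c₁) + b₁ := by rw [hf₁]
  have hf₁c₂ : f₁ c₂ = a₁ * exp (k₁ * c₂) + b₁ := by rw [hf₁]
  have hf₃c₁ : f₃ c₁ = a₃ * exp (k₃ * c₁) + b₃ := by rw [hf₃]
  have hf₃c₂ : f₃ c₂ = a₃ * exp (k₃ * c₂) + b₃ := by rw [hf₃]
  have P1 : a₁ * exp (k₁ * c₁) + (-a₂) * exp (k₂ * c₁) + (b₁ - b₂) = 0 := by
    have := e₂c₁; rw [hf₁c₁] at this; linarith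
  have P2 : a₁ * exp (k₁ * c₂) + (-a₂) * exp (k₂ * c₂) + (b₁ - b₂) = 0 := by
    have := e₂c₂; rw [hf₁c₂] at this; linarith
  have Q1 : a₂ * exp (k₂ * c₁) + (-a₃) * exp (k₃ * c₁) + (b₂ - b₃) = 0 := by
    have := e₂c₁; rw [h1, hf₃c₁] at this; linarith
  have Q2 : a₂ * exp (k₂ * c₂) + (-a₃) * exp (k₃ * c₂) + (b₂ - b₃) = 0 := by
    have := e₂c₂; rw [h2, hf₃c₂] at this; linarith
  have K₁ := key_sign k₁ k₂ a₁ (-a₂) (b₁ - b₂) c₁ c₂ hk12 hk2 ha₁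
    (neg_ne_zero.2 ha₂) hc P1 P2
  have K₂ := key_sign k₂ k₃ a₂ (-a₃) (b₂ - b₃) c₁ c₂ hk23 hk3 ha₂
    (neg_ne_zero.2 ha₃) hc Q1 Q2
  have rw₁ : ∀ t, a₁ * (a₁ * exp (k₁ * t) + (-a₂) * exp (k₂ * t) + (b₁ - b₂)) =
      a₁ * (f₁ t - (a₂ * exp (k₂ * t) + b₂)) := by intro t; rw [hf₁]; ring
  have rw₂ : ∀ t, a₂ * (a₂ * exp (k₂ * t) + (-a₃) * exp (k₃ * t) + (b₂ - b₃)) =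
      a₂ * ((a₂ * exp (k₂ * t) + b₂) - f₃ t) := by intro t; rw [hf₃]; ring
  have strict : ∀ t : ℝ, t ≠ c₁ → t ≠ c₂ →
      min (f₁ t) (f₃ t) < a₂ * exp (k₂ * t) + b₂ ∧
      a₂ * exp (k₂ * t) + b₂ < max (f₁ t) (f₃ t) := by
    intro t htc₁ htc₂
    obtain ⟨K₁a, K₁b, K₁c⟩ := K₁ t
    obtain ⟨K₂a, K₂b, K₂c⟩ := K₂ t
    rw [rw₁ t] at K₁a K₁b K₁c
    rw [rw₂ t] at K₂a K₂b K₂c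
    have lemP : ∀ x y : ℝ, 0 < a₁ * x → 0 < a₂ * y → 0 < x * y := by
      intro x y hx hy
      nlinarith [mul_pos hx hy, ha₁a₂]
    have lemN : ∀ x y : ℝ, a₁ * x < 0 → a₂ * y < 0 → 0 < x * y := by
      intro x y hx hy
      nlinarith [mul_pos_of_neg_of_neg hx hy, ha₁a₂]
    have lem2 : ∀ x y : ℝ, 0 < x * y → x < 0 → y < 0 := by
      intro x y h hx
      nlinarith
    have lem3 : ∀ x y : ℝ, 0 < x * y → 0 < x → 0 < y := by
      intro x y h hx
      nlinarith
    have hprod : 0 < (f₁ t - (a₂ * exp (k₂ * t) + b₂)) *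
        ((a₂ * exp (k₂ * t) + b₂) - f₃ t) := by
      rcases lt_trichotomy t c₁ with h | h | h
      · exact lemP _ _ (K₁a h) (K₂a h)
      · exact absurd h htc₁
      · rcases lt_trichotomy t c₂ with h' | h' | h'
        · exact lemN _ _ (K₁b h h') (K₂b h h')
        · exact absurd h' htc₂
        · exact lemP _ _ (K₁c h') (K₂c h')
    rcases lt_trichotomy (f₁ t) (a₂ * exp (k₂ * t) + b₂) with h | h | h
    · have h3 : a₂ * exp (k₂ * t) + b₂ < f₃ t := by
        have := lem2 _ _ hprod (by linarith)
        linarith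
      exact ⟨lt_of_le_of_lt (min_le_left _ _) h,
        lt_of_lt_of_le h3 (le_max_right _ _)⟩
    · exfalso; rw [← h] at hprod; simp at hprod
    · have h3 : f₃ t < a₂ * exp (k₂ * t) + b₂ := by
        have := lem3 _ _ hprod (by linarith)
        linarith
      exact ⟨lt_of_le_of_lt (min_le_right _ _) h3,
        lt_of_lt_of_le h (le_max_left _ _)⟩
  refine ⟨a₂, b₂, ha₂, e₂c₁, e₂c₂, ?_, strict⟩
  intro t
  by_cases ht1 : t = c₁
  · subst ht1
    rw [e₂c₁]
    exact ⟨min_le_left _ _, le_max_left _ _⟩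
  · by_cases ht2 : t = c₂
    · subst ht2
      rw [e₂c₂]
      exact ⟨min_le_left _ _, le_max_left _ _⟩
    · exact ⟨(strict t ht1 ht2).1.le, (strict t ht1 ht2).2.le⟩
end

section
/- Fix t₁ < ⋯ < tₙ (n ≥ 3) and T ∈ ℝⁿ such that T does not have a coordinate maximum strictly between two minima nor a minimum strictly between two maxima. Define E_∞ : (−∞, 0) → [0, ∞) by E_∞(k) = dist_∞(T, G_k), where G_k = span{(e^{k t₁},…,e^{k tₙ}), (1,…,1)} and dist_∞ is the distance with respect to the max norm. Then E_∞ is strictly quasiconvex: for all k₁ < k₂ < k₃ < 0, E_∞(k₂) < max {E_∞(k₁), E_∞(k₃)}. -/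
/-!
For `k < 0` the vector `u = (e^{k t_l})_l` is strictly decreasing, so for `i < q < j` we have
`u_q = λ u_i + (1 - λ) u_j` with `λ ∈ (0, 1)`. The functional
`r ↦ λ r_i + (1 - λ) r_j - r_q` vanishes on `G_k` and has sup-norm at most `2`, so every triple
gives the lower bound `|λ T_i + (1 - λ) T_j - T_q| / 2 ≤ E(k)`. Conversely the best of these
bounds is attained: by Helly's theorem in the plane `G_k`, it suffices that any three of the slabs
`|T_l - v_l| ≤ M` meet, and three of them meet at the interpolating line.

For `k < k' < 0` we have `e^{k' t} = (e^{k t})^{k'/k}` with `0 < k'/k < 1`, so strict concavity of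
the power map makes `λ = λ(k)` strictly increasing. Hence each triple bound is the absolute value
of a strictly monotone function of `k`, thus strictly quasiconvex, unless `T_i = T_j`. A triple
with `T_i = T_j` cannot be the maximising one: the best approximation would equioscillate on
`i, q, j`, hence be constant, making `T_q` a maximum between two minima or a minimum between two
maxima.
-/

open Real Set Module

noncomputable def baryWeight (a b c : ℝ) : ℝ := (b - c) / (a - c)

lemma baryWeight_mul_add_one_sub_mul {a b c : ℝ} (h : a ≠ c) :
    baryWeight a b c * a + (1 - baryWeight a b c) * c = b := by
  have : a - c ≠ 0 := sub_ne_zero.mpr h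
  unfold baryWeight
  field_simp
  ring

lemma baryWeight_pos {a b c : ℝ} (hcb : c < b) (hba : b < a) : 0 < baryWeight a b c :=
  div_pos (sub_pos.mpr hcb) (sub_pos.mpr (hcb.trans hba))

lemma baryWeight_lt_one {a b c : ℝ} (hcb : c < b) (hba : b < a) : baryWeight a b c < 1 :=
  (div_lt_one (sub_pos.mpr (hcb.trans hba))).mpr (by linarith)

lemma baryWeight_lt_baryWeight_of_strictConcaveOn {f : ℝ → ℝ} {s : Set ℝ}
    (hf : StrictConcaveOn ℝ s f) (hmono : StrictMonoOn f s) {a b c : ℝ} (ha : a ∈ s)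
    (hc : c ∈ s) (hcb : c < b) (hba : b < a) :
    baryWeight a b c < baryWeight (f a) (f b) (f c) := by
  have hconc : baryWeight a b c * f a + (1 - baryWeight a b c) * f c < f b := by
    simpa only [smul_eq_mul, baryWeight_mul_add_one_sub_mul (hcb.trans hba).ne'] using
      hf.2 ha hc (hcb.trans hba).ne' (baryWeight_pos hcb hba)
        (sub_pos.2 (baryWeight_lt_one hcb hba)) (add_sub_cancel _ 1)
  have hfca : f c < f a := hmono hc ha (hcb.trans hba)
  change baryWeight a b c < (f b - f c) / (f a - f c)
  rw [lt_div_iff₀ (sub_pos.2 hfca)]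
  linarith

lemma baryWeight_exp_strictMonoOn {x y z : ℝ} (hxy : x < y) (hyz : y < z) :
    StrictMonoOn (fun k => baryWeight (exp (k * x)) (exp (k * y)) (exp (k * z))) (Iio 0) := by
  intro k hk k' hk' hkk'
  rw [mem_Iio] at hk hk'
  have hr₀ : 0 < k' / k := div_pos_of_neg_of_neg hk' hk
  have hr₁ : k' / k < 1 := (div_lt_one_of_neg hk).2 hkk'
  have hpow : ∀ s, exp (k * s) ^ (k' / k) = exp (k' * s) := fun s => by
    rw [← Real.exp_mul]
    congr 1
    field_simp [hk.ne]
  have := baryWeight_lt_baryWeight_of_strictConcaveOn (strictConcaveOn_rpow hr₀ hr₁)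
    (strictMonoOn_rpow_Ici_of_exponent_pos hr₀) (exp_pos (k * x)).le (exp_pos (k * z)).le
    (b := exp (k * y)) (exp_lt_exp.2 (by nlinarith)) (exp_lt_exp.2 (by nlinarith))
  simpa only [hpow] using this

lemma abs_lt_max_abs_abs_of_lt_of_lt {α : Type*} [AddCommGroup α] [LinearOrder α]
    [IsOrderedAddMonoid α] {a b c : α} (hab : a < b) (hbc : b < c) : |b| < max |a| |c| :=
  abs_lt.2 ⟨((neg_le_neg (le_max_left _ _)).trans (neg_abs_le a)).trans_lt hab,
    hbc.trans_le ((le_abs_self c).trans (le_max_right _ _))⟩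

lemma finrank_span_pair_le {R V : Type*} [Ring R] [StrongRankCondition R] [AddCommGroup V]
    [Module R V] (x y : V) : finrank R (Submodule.span R {x, y}) ≤ 2 := by
  classical
  refine (finrank_span_le_card _).trans ?_
  simpa [Set.toFinset_insert] using Finset.card_le_two

lemma le_sInf_norm_sub {R V : Type*} [Semiring R] [SeminormedAddCommGroup V] [Module R V]
    (G : Submodule R V) (T : V) {m : ℝ} (h : ∀ v ∈ G, m ≤ ‖T - v‖) :
    m ≤ sInf {d | ∃ v ∈ G, d = ‖T - v‖} :=
  le_csInf ⟨_, 0, G.zero_mem, rfl⟩ (by rintro _ ⟨v, hv, rfl⟩; exact h v hv)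

lemma sInf_norm_sub_le {R V : Type*} [Semiring R] [SeminormedAddCommGroup V] [Module R V]
    (G : Submodule R V) (T : V) {v : V} (hv : v ∈ G) :
    sInf {d | ∃ v ∈ G, d = ‖T - v‖} ≤ ‖T - v‖ :=
  csInf_le ⟨0, by rintro _ ⟨w, -, rfl⟩; exact norm_nonneg _⟩ ⟨v, hv, rfl⟩

section TripleResidual

variable {ι : Type*} (u : ι → ℝ)

noncomputable def tripleResidual (T : ι → ℝ) (i q j : ι) : ℝ :=
  baryWeight (u i) (u q) (u j) * T i + (1 - baryWeight (u i) (u q) (u j)) * T j - T q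

variable {u}

lemma tripleResidual_eq_zero_of_mem_span {v : ι → ℝ}
    (hv : v ∈ Submodule.span ℝ {u, fun _ => 1}) {i q j : ι} (hij : u i ≠ u j) :
    tripleResidual u v i q j = 0 := by
  obtain ⟨a, b, rfl⟩ := Submodule.mem_span_pair.mp hv
  have := baryWeight_mul_add_one_sub_mul (b := u q) hij
  simp only [tripleResidual, Pi.add_apply, Pi.smul_apply, smul_eq_mul, mul_one]
  linear_combination a * this

lemma tripleResidual_sub_of_mem_span {T v : ι → ℝ}
    (hv : v ∈ Submodule.span ℝ {u, fun _ => 1}) {i q j : ι} (hij : u i ≠ u j) :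
    tripleResidual u (T - v) i q j = tripleResidual u T i q j := by
  have := tripleResidual_eq_zero_of_mem_span (q := q) hv hij
  simp only [tripleResidual, Pi.sub_apply] at this ⊢
  linear_combination -this

lemma abs_tripleResidual_le [Fintype ι] {i q j : ι} (hjq : u j < u q) (hqi : u q < u i)
    (r : ι → ℝ) : |tripleResidual u r i q j| ≤ 2 * ‖r‖ := by
  have hw₀ := baryWeight_pos hjq hqi
  have hw₁ := baryWeight_lt_one hjq hqi
  have hr : ∀ l, |r l| ≤ ‖r‖ := fun l => norm_le_pi_norm r l
  obtain ⟨hi₁, hi₂⟩ := abs_le.1 (hr i)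
  obtain ⟨hj₁, hj₂⟩ := abs_le.1 (hr j)
  obtain ⟨hq₁, hq₂⟩ := abs_le.1 (hr q)
  rw [tripleResidual, abs_le]
  constructor <;> nlinarith

lemma abs_tripleResidual_le_of_mem_span [Fintype ι] {i q j : ι} (hjq : u j < u q)
    (hqi : u q < u i) (T : ι → ℝ) {v : ι → ℝ} (hv : v ∈ Submodule.span ℝ {u, fun _ => 1}) :
    |tripleResidual u T i q j| ≤ 2 * ‖T - v‖ := by
  rw [← tripleResidual_sub_of_mem_span hv (hjq.trans hqi).ne']
  exact abs_tripleResidual_le hjq hqi _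

lemma eq_of_tripleResidual_eq_neg {i q j : ι} (hjq : u j < u q) (hqi : u q < u i)
    {r : ι → ℝ} {C : ℝ} (hr : ∀ l, |r l| ≤ C) (hres : tripleResidual u r i q j = -(2 * C)) :
    r i = -C ∧ r j = -C ∧ r q = C := by
  have hw₀ := baryWeight_pos hjq hqi
  have hw₁ := baryWeight_lt_one hjq hqi
  obtain ⟨hi, -⟩ := abs_le.1 (hr i)
  obtain ⟨hj, -⟩ := abs_le.1 (hr j)
  obtain ⟨-, hq⟩ := abs_le.1 (hr q)
  rw [tripleResidual] at hres
  refine ⟨?_, ?_, ?_⟩ <;> nlinarith [mul_nonneg hw₀.le (by linarith : 0 ≤ r i + C),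
    mul_nonneg (sub_pos.2 hw₁).le (by linarith : 0 ≤ r j + C)]

lemma eq_of_mem_span_of_eq {v : ι → ℝ} (hv : v ∈ Submodule.span ℝ {u, fun _ => 1})
    {i j : ι} (hij : u i ≠ u j) (h : v i = v j) (l : ι) : v l = v i := by
  obtain ⟨a, b, rfl⟩ := Submodule.mem_span_pair.mp hv
  simp only [Pi.add_apply, Pi.smul_apply, smul_eq_mul, mul_one] at h ⊢
  have ha : a = 0 := by
    by_contra ha
    exact hij (mul_left_cancel₀ ha (by linarith))
  simp [ha]

lemma extremal_of_tripleResidual_eq_neg [Fintype ι] {i q j : ι} (hjq : u j < u q)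
    (hqi : u q < u i) {T v : ι → ℝ} (hv : v ∈ Submodule.span ℝ {u, fun _ => 1}) {C : ℝ}
    (hTv : ‖T - v‖ ≤ C) (hres : tripleResidual u T i q j = -(2 * C)) (hTij : T i = T j) :
    (∀ l, T l ≤ T q) ∧ (∀ l, T i ≤ T l) ∧ (∀ l, T j ≤ T l) := by
  have hr : ∀ l, |(T - v) l| ≤ C := fun l => (norm_le_pi_norm (T - v) l).trans hTv
  obtain ⟨hi, hj, hq⟩ := eq_of_tripleResidual_eq_neg hjq hqi hr
    ((tripleResidual_sub_of_mem_span hv (hjq.trans hqi).ne').trans hres)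
  simp only [Pi.sub_apply] at hi hj hq
  have hvl := eq_of_mem_span_of_eq hv (hjq.trans hqi).ne' (by linarith)
  have hbound : ∀ l, T i ≤ T l ∧ T l ≤ T q := fun l => by
    obtain ⟨h₁, h₂⟩ := abs_le.1 (hr l)
    simp only [Pi.sub_apply, hvl l] at h₁ h₂
    constructor <;> linarith [hvl q]
  exact ⟨fun l => (hbound l).2, fun l => (hbound l).1, fun l => hTij ▸ (hbound l).1⟩

lemma extremal_of_norm_sub_le [Fintype ι] {i q j : ι} (hjq : u j < u q) (hqi : u q < u i)
    {T v : ι → ℝ} (hv : v ∈ Submodule.span ℝ {u, fun _ => 1})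
    (hTv : ‖T - v‖ ≤ |tripleResidual u T i q j| / 2) (hTij : T i = T j) :
    ((∀ l, T l ≤ T q) ∧ (∀ l, T i ≤ T l) ∧ (∀ l, T j ≤ T l)) ∨
      ((∀ l, T q ≤ T l) ∧ (∀ l, T l ≤ T i) ∧ (∀ l, T l ≤ T j)) := by
  rcases le_total 0 (tripleResidual u T i q j) with hres | hres
  · right
    have hneg : tripleResidual u (-T) i q j = -(2 * (|tripleResidual u T i q j| / 2)) := by
      rw [abs_of_nonneg hres]
      simp only [tripleResidual, Pi.neg_apply]
      ring
    obtain ⟨h₁, h₂, h₃⟩ := extremal_of_tripleResidual_eq_neg hjq hqi (neg_mem hv)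
      (by rwa [neg_sub_neg, norm_sub_rev]) hneg (by simp only [Pi.neg_apply, hTij])
    exact ⟨fun l => neg_le_neg_iff.1 (h₁ l), fun l => neg_le_neg_iff.1 (h₂ l),
      fun l => neg_le_neg_iff.1 (h₃ l)⟩
  · left
    refine extremal_of_tripleResidual_eq_neg hjq hqi hv hTv ?_ hTij
    rw [abs_of_nonpos hres]
    ring

lemma exists_mem_span_abs_sub_eq {i j : ι} (hij : u i ≠ u j) (T : ι → ℝ) (q : ι) :
    ∃ v ∈ Submodule.span ℝ {u, fun _ => 1},
      ∀ l ∈ ({i, q, j} : Set ι), |T l - v l| = |tripleResidual u T i q j| / 2 := by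
  set s := tripleResidual u T i q j / 2 with hs
  set a := (T i - T j) / (u i - u j)
  refine ⟨a • u + (T i - s - a * u i) • fun _ => 1, Submodule.mem_span_pair.2 ⟨_, _, rfl⟩, ?_⟩
  have hline : ∀ l, (a • u + (T i - s - a * u i) • fun _ => 1 : ι → ℝ) l
      = a * (u l - u i) + T i - s := fun l => by
    simp only [Pi.add_apply, Pi.smul_apply, smul_eq_mul]
    ring
  have ha : a * (u i - u j) = T i - T j := div_mul_cancel₀ _ (sub_ne_zero.2 hij)
  have hq := baryWeight_mul_add_one_sub_mul (b := u q) hij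
  have habs : |s| = |tripleResidual u T i q j| / 2 := by rw [hs, abs_div, abs_two]
  rintro l (h | h | h) <;> rw [h, hline]
  · rw [← habs]
    congr 1
    ring
  · rw [← habs, ← abs_neg]
    congr 1
    rw [hs, tripleResidual]
    linear_combination -(1 - baryWeight (u i) (u q) (u j)) * ha - a * hq
  · rw [← habs]
    congr 1
    linear_combination ha

lemma exists_mem_span_norm_sub_le [Fintype ι] [LinearOrder ι] (hcard : 3 ≤ Fintype.card ι)
    (hu : Function.Injective u) (T : ι → ℝ) {M : ℝ}
    (hM : ∀ i q j, i < q → q < j → |tripleResidual u T i q j| ≤ 2 * M) :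
    ∃ v ∈ Submodule.span ℝ {u, fun _ => 1}, ‖T - v‖ ≤ M := by
  set G := Submodule.span ℝ {u, fun _ => (1 : ℝ)}
  let K : ι → Set G := fun l =>
    (LinearMap.proj l ∘ₗ G.subtype) ⁻¹' Metric.closedBall (T l) M
  have hK : ∀ l v, v ∈ K l ↔ |T l - (v : ι → ℝ) l| ≤ M := fun l v => by
    simp [K, Real.dist_eq, abs_sub_comm]
  obtain ⟨v, hv⟩ : (⋂ l ∈ Finset.univ, K l).Nonempty := by
    refine Convex.helly_theorem' (fun l _ => (convex_closedBall _ _).linear_preimage _)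
      fun I _ hI => ?_
    obtain ⟨J, hIJ, hJ⟩ := Finset.exists_superset_card_eq
      (hI.trans (by linarith [finrank_span_pair_le (R := ℝ) u fun _ => (1 : ℝ)])) hcard
    set f := J.orderEmbOfFin hJ
    obtain ⟨p, hp, hpT⟩ := exists_mem_span_abs_sub_eq
      (hu.ne (f.strictMono (show (0 : Fin 3) < 2 by decide)).ne) T (f 1)
    refine ⟨⟨p, hp⟩, Set.mem_iInter₂.2 fun l hl => (hK l _).2 ?_⟩
    obtain ⟨m, rfl⟩ : l ∈ Set.range f := by
      rw [J.range_orderEmbOfFin]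
      exact hIJ hl
    rw [hpT (f m) (by fin_cases m <;> simp)]
    linarith [hM (f 0) (f 1) (f 2) (f.strictMono (by decide)) (f.strictMono (by decide))]
  have : Nonempty ι := Fintype.card_pos_iff.1 (by omega)
  exact ⟨v, v.2, (pi_norm_le_iff_of_nonempty _).2 fun l =>
    (hK l v).1 (Set.mem_iInter₂.1 hv l (Finset.mem_univ l))⟩

end TripleResidual

lemma exists_max_abs_tripleResidual {ι : Type*} [Fintype ι] [LinearOrder ι]
    (hcard : 3 ≤ Fintype.card ι) (u T : ι → ℝ) :
    ∃ i q j, i < q ∧ q < j ∧ ∀ i' q' j', i' < q' → q' < j' →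
      |tripleResidual u T i' q' j'| ≤ |tripleResidual u T i q j| := by
  obtain ⟨J, -, hJ⟩ := Finset.exists_subset_card_eq (s := Finset.univ) hcard
  set f := J.orderEmbOfFin hJ
  obtain ⟨⟨i, q, j⟩, hp, hmax⟩ := Finset.exists_max_image
    {p : ι × ι × ι | p.1 < p.2.1 ∧ p.2.1 < p.2.2}
    (fun p => |tripleResidual u T p.1 p.2.1 p.2.2|)
    ⟨(f 0, f 1, f 2), by simp [f.lt_iff_lt]⟩
  simp only [Finset.mem_filter, Finset.mem_univ, true_and] at hp
  exact ⟨i, q, j, hp.1, hp.2, fun i' q' j' h₁ h₂ => hmax (i', q', j') (by simp [h₁, h₂])⟩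

lemma abs_tripleResidual_exp_lt_max {ι : Type*} {t T : ι → ℝ} {i q j : ι} (hiq : t i < t q)
    (hqj : t q < t j) (hT : T i ≠ T j) {k₁ k₂ k₃ : ℝ} (h₁₂ : k₁ < k₂) (h₂₃ : k₂ < k₃)
    (hk₃ : k₃ < 0) :
    |tripleResidual (fun l => exp (k₂ * t l)) T i q j| <
      max |tripleResidual (fun l => exp (k₁ * t l)) T i q j|
        |tripleResidual (fun l => exp (k₃ * t l)) T i q j| := by
  set w := fun k => baryWeight (exp (k * t i)) (exp (k * t q)) (exp (k * t j))
  have hres : ∀ k, tripleResidual (fun l => exp (k * t l)) T i q j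
      = w k * (T i - T j) + (T j - T q) := fun k => by
    simp only [tripleResidual, w]
    ring
  have hw := baryWeight_exp_strictMonoOn hiq hqj
  have hw₁₂ : w k₁ < w k₂ := hw (h₁₂.trans (h₂₃.trans hk₃)) (h₂₃.trans hk₃) h₁₂
  have hw₂₃ : w k₂ < w k₃ := hw (h₂₃.trans hk₃) hk₃ h₂₃
  simp only [hres]
  rcases hT.lt_or_gt with h | h
  · rw [max_comm]
    exact abs_lt_max_abs_abs_of_lt_of_lt (by nlinarith) (by nlinarith)
  · exact abs_lt_max_abs_abs_of_lt_of_lt (by nlinarith) (by nlinarith)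

theorem stmt_14 (n : ℕ) (hn : 3 ≤ n) (t : Fin n → ℝ) (ht : StrictMono t)
    (T : Fin n → ℝ)
    (hnomaxmin : ¬ ∃ i q j : Fin n, i < q ∧ q < j ∧
      (∀ l, T l ≤ T q) ∧ (∀ l, T i ≤ T l) ∧ (∀ l, T j ≤ T l))
    (hnominmax : ¬ ∃ i q j : Fin n, i < q ∧ q < j ∧
      (∀ l, T q ≤ T l) ∧ (∀ l, T l ≤ T i) ∧ (∀ l, T l ≤ T j))
    (G : ℝ → Submodule ℝ (Fin n → ℝ))
    (hG : ∀ k, G k = Submodule.span ℝ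
      {(fun i => Real.exp (k * t i)), (fun _ => (1 : ℝ))})
    (E : ℝ → ℝ) (hE : ∀ k, E k = sInf {d | ∃ v ∈ G k, d = ‖T - v‖}) :
    ∀ k₁ k₂ k₃ : ℝ, k₁ < k₂ → k₂ < k₃ → k₃ < 0 →
      E k₂ < max (E k₁) (E k₃) := by
  intro k₁ k₂ k₃ h₁₂ h₂₃ hk₃
  have hk₂ := h₂₃.trans hk₃
  have hanti : ∀ k < 0, StrictAnti fun l => exp (k * t l) := fun k hk a b hab =>
    exp_lt_exp.2 (mul_lt_mul_of_neg_left (ht hab) hk)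
  have hcard : 3 ≤ Fintype.card (Fin n) := by rwa [Fintype.card_fin]
  have hlow : ∀ k < 0, ∀ i q j, i < q → q < j →
      |tripleResidual (fun l => exp (k * t l)) T i q j| ≤ 2 * E k := fun k hk i q j hiq hqj => by
    rw [hE, ← div_le_iff₀' two_pos]
    refine le_sInf_norm_sub _ _ fun v hv => ?_
    rw [hG] at hv
    linarith [abs_tripleResidual_le_of_mem_span (u := fun l => exp (k * t l))
      (hanti k hk hqj) (hanti k hk hiq) T hv]
  obtain ⟨i, q, j, hiq, hqj, hmax⟩ := exists_max_abs_tripleResidual hcard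
    (fun l => exp (k₂ * t l)) T
  obtain ⟨v, hv, hTv⟩ := exists_mem_span_norm_sub_le hcard (hanti k₂ hk₂).injective T
    (M := |tripleResidual (fun l => exp (k₂ * t l)) T i q j| / 2)
    fun i' q' j' h₁ h₂ => by linarith [hmax i' q' j' h₁ h₂]
  have hTij : T i ≠ T j := fun h =>
    (extremal_of_norm_sub_le (u := fun l => exp (k₂ * t l)) (hanti k₂ hk₂ hqj)
      (hanti k₂ hk₂ hiq) hv hTv h).elim
        (fun h' => hnomaxmin ⟨i, q, j, hiq, hqj, h'⟩) (fun h' => hnominmax ⟨i, q, j, hiq, hqj, h'⟩)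
  have hE₂ : E k₂ ≤ ‖T - v‖ := by
    rw [hE, hG]
    exact sInf_norm_sub_le _ _ hv
  rcases lt_max_iff.1 (abs_tripleResidual_exp_lt_max (ht hiq) (ht hqj) hTij h₁₂ h₂₃ hk₃)
    with h | h
  · exact lt_max_of_lt_left (by linarith [hlow k₁ (h₁₂.trans hk₂) i q j hiq hqj])
  · exact lt_max_of_lt_right (by linarith [hlow k₃ hk₃ i q j hiq hqj])
end

section
/- Fix t₁ < ⋯ < tₙ and T ∈ ℝⁿ. Define E_∞(k) = dist_∞(T, G_k) for k < 0, where G_k = span{(e^{k t₁},…,e^{k tₙ}), (1,…,1)} ⊆ ℝⁿ with the max norm. If there exist indices p < q < r such that T_p < T_q, T_q > T_r, and T attains its maximum at q while attaining its minimum at two indices on either side of q (a maximum between two minima), then E_∞ is constant, equal to (max_i T_i − min_i T_i)/2, and for every k < 0 the constant vector ((M+m)/2,…,(M+m)/2) is a best approximation to T in G_k, where M = max_i T_i and m = min_i T_i. -/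
/-!
Every element of `G_k` has the form `l ↦ a e^{k t_l} + b`, which is monotone or antitone in `l`
because `t` is. Its value at the maximiser `q` therefore does not exceed its value at one of the
minimisers `i < q < j`, say at `p`. Since `T_p = m`, the deviations `T_q - v_q ≥ M - v_p` and
`v_p - T_p` add up to at least `M - m`, so one of them is at least `(M - m) / 2`. The constant
`(M + m) / 2` attains this bound.
-/

open Real

section

variable {ι : Type*}

lemma le_max_of_monotone_or_antitone {α : Type*} [Preorder ι] [LinearOrder α] {g : ι → α}
    (hg : Monotone g ∨ Antitone g) {i q j : ι} (hiq : i ≤ q) (hqj : q ≤ j) :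
    g q ≤ max (g i) (g j) := by
  rcases hg with hg | hg
  · exact le_max_of_le_right (hg hqj)
  · exact le_max_of_le_left (hg hiq)

lemma monotone_or_antitone_mul_add [Preorder ι] {f : ι → ℝ} (hf : Monotone f ∨ Antitone f)
    (a b : ℝ) :
    Monotone (fun x => a * f x + b) ∨ Antitone (fun x => a * f x + b) := by
  rcases le_total 0 a with ha | ha <;> rcases hf with hf | hf
  · exact .inl ((hf.const_mul ha).add_const b)
  · exact .inr ((hf.const_mul ha).add_const b)
  · exact .inr ((hf.const_mul_of_nonpos ha).add_const b)
  · exact .inl ((hf.const_mul_of_nonpos ha).add_const b)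

lemma monotone_or_antitone_of_mem_span_pair_one [Preorder ι] {f v : ι → ℝ}
    (hf : Monotone f ∨ Antitone f) (hv : v ∈ Submodule.span ℝ {f, fun _ => (1 : ℝ)}) :
    Monotone v ∨ Antitone v := by
  obtain ⟨a, b, rfl⟩ := Submodule.mem_span_pair.mp hv
  convert monotone_or_antitone_mul_add hf a b using 2 <;>
    · funext x
      simp

lemma monotone_or_antitone_exp_mul [Preorder ι] {t : ι → ℝ} (ht : Monotone t) (k : ℝ) :
    Monotone (fun l => exp (k * t l)) ∨ Antitone (fun l => exp (k * t l)) := by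
  rcases le_total 0 k with hk | hk
  · exact .inl (exp_monotone.comp (ht.const_mul hk))
  · exact .inr (exp_monotone.comp_antitone (ht.const_mul_of_nonpos hk))

variable [Fintype ι]

lemma sub_div_two_le_norm_sub {T v : ι → ℝ} {i q j : ι} (hTij : T i = T j)
    (hv : v q ≤ max (v i) (v j)) : (T q - T i) / 2 ≤ ‖T - v‖ := by
  have hdev : ∀ l, |T l - v l| ≤ ‖T - v‖ := fun l => by
    simpa only [Pi.sub_apply, Real.norm_eq_abs] using norm_le_pi_norm (T - v) l
  have hq := (abs_le.mp (hdev q)).2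
  have hi := (abs_le.mp (hdev i)).1
  have hj := (abs_le.mp (hdev j)).1
  rcases le_total (v i) (v j) with h | h
  · rw [max_eq_right h] at hv
    linarith
  · rw [max_eq_left h] at hv
    linarith

lemma norm_sub_const_midpoint_le {T : ι → ℝ} {m M : ℝ} (hmM : m ≤ M) (hm : ∀ l, m ≤ T l)
    (hM : ∀ l, T l ≤ M) : ‖T - fun _ => (M + m) / 2‖ ≤ (M - m) / 2 := by
  refine (pi_norm_le_iff_of_nonneg (by linarith)).mpr fun l => ?_
  rw [Pi.sub_apply, Real.norm_eq_abs, abs_le]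
  constructor <;> linarith [hm l, hM l]

end

theorem stmt_15_general (n : ℕ) (t : Fin n → ℝ) (ht : StrictMono t) (T : Fin n → ℝ)
    (i q j : Fin n) (hiq : i < q) (hqj : q < j)
    (hmax : ∀ l, T l ≤ T q) (hmin₁ : ∀ l, T i ≤ T l) (hmin₂ : ∀ l, T j ≤ T l)
    (G : ℝ → Submodule ℝ (Fin n → ℝ))
    (hG : ∀ k, G k = Submodule.span ℝ
      {(fun l => Real.exp (k * t l)), (fun _ => (1 : ℝ))}) :
    ∀ k < (0 : ℝ),
      sInf {d | ∃ v ∈ G k, d = ‖T - v‖} = (T q - T i) / 2 ∧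
      (fun _ => (T q + T i) / 2 : Fin n → ℝ) ∈ G k ∧
      ‖T - (fun _ => (T q + T i) / 2 : Fin n → ℝ)‖ = (T q - T i) / 2 ∧
      ∀ v ∈ G k, ‖T - (fun _ => (T q + T i) / 2 : Fin n → ℝ)‖ ≤ ‖T - v‖ := by
  intro k _
  have hlower : ∀ v ∈ G k, (T q - T i) / 2 ≤ ‖T - v‖ := fun v hv =>
    sub_div_two_le_norm_sub (le_antisymm (hmin₁ j) (hmin₂ i))
      (le_max_of_monotone_or_antitone
        (monotone_or_antitone_of_mem_span_pair_one
          (monotone_or_antitone_exp_mul ht.monotone k) (hG k ▸ hv))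
        hiq.le hqj.le)
  have hconst : (fun _ => (T q + T i) / 2 : Fin n → ℝ) ∈ G k := by
    rw [hG, show (fun _ => (T q + T i) / 2 : Fin n → ℝ) = ((T q + T i) / 2) • fun _ => 1 by
      funext; simp]
    exact Submodule.smul_mem _ _ (Submodule.subset_span (by simp))
  have hnorm : ‖T - (fun _ => (T q + T i) / 2 : Fin n → ℝ)‖ = (T q - T i) / 2 :=
    le_antisymm (norm_sub_const_midpoint_le (hmax i) hmin₁ hmax) (hlower _ hconst)
  refine ⟨?_, hconst, hnorm, fun v hv => hnorm ▸ hlower v hv⟩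
  exact IsLeast.csInf_eq ⟨⟨_, hconst, hnorm.symm⟩, by rintro _ ⟨v, hv, rfl⟩; exact hlower v hv⟩

theorem stmt_15 (n : ℕ) (t : Fin n → ℝ) (ht : StrictMono t) (T : Fin n → ℝ)
    (i q j : Fin n) (hiq : i < q) (hqj : q < j)
    (hmax : ∀ l, T l ≤ T q) (hmin₁ : ∀ l, T i ≤ T l) (hmin₂ : ∀ l, T j ≤ T l)
    (hlt₁ : T i < T q) (hlt₂ : T j < T q)
    (G : ℝ → Submodule ℝ (Fin n → ℝ))
    (hG : ∀ k, G k = Submodule.span ℝ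
      {(fun l => Real.exp (k * t l)), (fun _ => (1 : ℝ))}) :
    ∀ k < (0 : ℝ),
      sInf {d | ∃ v ∈ G k, d = ‖T - v‖} = (T q - T i) / 2 ∧
      (fun _ => (T q + T i) / 2 : Fin n → ℝ) ∈ G k ∧
      ‖T - (fun _ => (T q + T i) / 2 : Fin n → ℝ)‖ = (T q - T i) / 2 ∧
      ∀ v ∈ G k, ‖T - (fun _ => (T q + T i) / 2 : Fin n → ℝ)‖ ≤ ‖T - v‖ :=
  stmt_15_general n t ht T i q j hiq hqj hmax hmin₁ hmin₂ G hG
end
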